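/- There exists a constant c > 0 such that for all odd prime powers q and all sets A ⊆ F_q with q^{2/3} ≤ |A| ≤ q, one has max(|A+A|, |A·A|) ≥ c·(q·|A|)^{1/2}. -/

import Mathlib

/-!
Count the solutions of `y + x z = w` with `x ∈ A⁻¹`, `y ∈ A`, `z ∈ A·A`, `w ∈ A+A`. Every
`(a, a', b) ∈ (A \ {0}) × A × A` gives the solution `(a⁻¹, a', ab, a' + b)`, so there are at least
`(|A| - 1)|A|²` of them. Expanding the count with a primitive additive character of `F_q`, the
trivial frequency contributes `|A|²|A+A||A·A|/q`, and by Cauchy–Schwarz and Plancherel the other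
frequencies contribute at most `√(q|A|²|A+A||A·A|)` (Vinh's point–line incidence bound). If both
`|A+A|` and `|A·A|` were below `(q|A|)^{1/2}/4`, these two terms would add up to less than
`5|A|³/16`, using `q ≤ |A|^{3/2}`, which is below the lower bound because `|A| ≥ 2`.
-/

open Finset Pointwise ComplexConjugate

section CommRing

variable {R : Type*} [CommRing R]

def charSum (ψ : AddChar R ℂ) (B : Finset R) (t : R) : ℂ := ∑ b ∈ B, ψ (t * b)

@[simp]
lemma charSum_zero (ψ : AddChar R ℂ) (B : Finset R) : charSum ψ B 0 = #B := by
  simp [charSum]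

variable [Fintype R] {ψ : AddChar R ℂ}

lemma charSum_mul_conj (B C : Finset R) (t : R) :
    charSum ψ B t * conj (charSum ψ C t) = ∑ i ∈ B ×ˢ C, ψ (t * (i.1 - i.2)) := by
  simp only [charSum, map_sum, sum_mul_sum, sum_product, ← AddChar.map_neg_eq_conj,
    ← AddChar.map_add_eq_mul, sub_eq_add_neg, mul_add, mul_neg]

lemma card_filter_eq_zero_mul_card {ι : Type*} [DecidableEq R] (hψ : ψ.IsPrimitive)
    (s : Finset ι) (f : ι → R) :
    (#{i ∈ s | f i = 0} : ℂ) * Fintype.card R = ∑ t, ∑ i ∈ s, ψ (t * f i) := by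
  rw [sum_comm]
  simp [AddChar.sum_mulShift _ hψ, sum_ite]

lemma sum_norm_charSum_sq [DecidableEq R] (hψ : ψ.IsPrimitive) (B : Finset R) :
    ∑ t, ‖charSum ψ B t‖ ^ 2 = Fintype.card R * #B := by
  have hdiag : #{i ∈ B ×ˢ B | i.1 - i.2 = 0} = #B := by
    simp only [sub_eq_zero, ← diag_eq_filter, diag_card]
  have key : ∑ t, charSum ψ B t * conj (charSum ψ B t) = Fintype.card R * #B := by
    simp_rw [charSum_mul_conj, ← card_filter_eq_zero_mul_card hψ, hdiag, mul_comm]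
  simp only [Complex.mul_conj, Complex.normSq_eq_norm_sq] at key
  exact_mod_cast key

lemma sum_norm_charSum_mul_norm_charSum_le [DecidableEq R] (hψ : ψ.IsPrimitive)
    (B C : Finset R) :
    ∑ t, ‖charSum ψ B t‖ * ‖charSum ψ C t‖ ≤
      √(Fintype.card R * #B) * √(Fintype.card R * #C) := by
  simpa only [sum_norm_charSum_sq hψ] using Real.sum_mul_le_sqrt_mul_sqrt univ
    (fun t => ‖charSum ψ B t‖) (fun t => ‖charSum ψ C t‖)

end CommRing

section Field

variable {F : Type*} [Field F] [DecidableEq F]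

-- `(x, y, z, w)` is an incidence between the point `(z, w)` and the line `w = x z + y`.
def incidences (X Y Z W : Finset F) : Finset (F × F × F × F) :=
  {i ∈ X ×ˢ Y ×ˢ Z ×ˢ W | i.2.1 + i.1 * i.2.2.1 = i.2.2.2}

lemma card_erase_zero_mul_le_card_incidences (A : Finset F) :
    #(A.erase 0) * #A * #A ≤ #(incidences A⁻¹ A (A * A) (A + A)) := by
  rw [← card_product, ← card_product]
  refine card_le_card_of_injOn (fun j => (j.1.1⁻¹, j.1.2, j.1.1 * j.2, j.1.2 + j.2)) ?_ ?_
  · rintro ⟨⟨a, a'⟩, b⟩ h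
    simp only [coe_product, Set.mem_prod, mem_coe, mem_erase] at h
    obtain ⟨⟨⟨ha0, ha⟩, ha'⟩, hb⟩ := h
    simp only [incidences, mem_coe, mem_filter, mem_product]
    refine ⟨⟨inv_mem_inv ha, ha', mul_mem_mul ha hb, add_mem_add ha' hb⟩, ?_⟩
    field_simp
  · rintro ⟨⟨a, a'⟩, b⟩ _ ⟨⟨c, c'⟩, d⟩ _ h
    simp only [Prod.mk.injEq, inv_inj] at h
    obtain ⟨rfl, rfl, -, h⟩ := h
    simp_all

variable [Fintype F] {ψ : AddChar F ℂ}

lemma norm_sum_charSum_mul_le (hψ : ψ.IsPrimitive) (X Z : Finset F) {t : F} (ht : t ≠ 0) :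
    ‖∑ x ∈ X, charSum ψ Z (t * x)‖ ≤ √(#X) * √(Fintype.card F * #Z) := by
  calc ‖∑ x ∈ X, charSum ψ Z (t * x)‖ ≤ ∑ x ∈ X, 1 * ‖charSum ψ Z (t * x)‖ := by
        simpa using norm_sum_le _ _
    _ ≤ √(∑ x ∈ X, 1 ^ 2) * √(∑ x ∈ X, ‖charSum ψ Z (t * x)‖ ^ 2) :=
        Real.sum_mul_le_sqrt_mul_sqrt _ _ _
    _ = √(#X) * √(∑ u ∈ X.image (t * ·), ‖charSum ψ Z u‖ ^ 2) := by
        simp [sum_image (mul_right_injective₀ ht).injOn]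
    _ ≤ √(#X) * √(Fintype.card F * #Z) := by
        rw [← sum_norm_charSum_sq hψ]
        gcongr
        exact subset_univ _

omit [DecidableEq F] in
lemma sum_char_add_mul_sub_eq (X Y Z W : Finset F) (t : F) :
    ∑ i ∈ X ×ˢ Y ×ˢ Z ×ˢ W, ψ (t * (i.2.1 + i.1 * i.2.2.1 - i.2.2.2)) =
      charSum ψ Y t * conj (charSum ψ W t) * ∑ x ∈ X, charSum ψ Z (t * x) := by
  have h : ∀ x y z w : F,
      ψ (t * (y + x * z - w)) = ψ (t * y) * conj (ψ (t * w)) * ψ (t * x * z) := by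
    intro x y z w
    rw [← AddChar.map_neg_eq_conj, ← AddChar.map_add_eq_mul, ← AddChar.map_add_eq_mul]
    ring_nf
  simp only [sum_product, h, charSum, map_sum, mul_sum, sum_mul]
  refine sum_congr rfl fun x _ => ?_
  rw [sum_comm]
  exact sum_congr rfl fun z _ => sum_comm

theorem card_incidences_le (X Y Z W : Finset F) :
    (Fintype.card F : ℝ) * #(incidences X Y Z W) ≤
      #X * #Y * #Z * #W + Fintype.card F * √(Fintype.card F * (#X * #Y * #Z * #W)) := by
  obtain ⟨ψ, hψ⟩ : ∃ ψ : AddChar F ℂ, ψ.IsPrimitive :=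
    ⟨_, AddChar.FiniteField.primitiveChar_to_Complex_isPrimitive F⟩
  set q : ℝ := (Fintype.card F : ℝ)
  set T : F → ℂ := fun t => charSum ψ Y t * conj (charSum ψ W t) * ∑ x ∈ X, charSum ψ Z (t * x)
  have hmain : T 0 = #X * #Y * #Z * #W := by
    simp only [T, charSum_zero, zero_mul, sum_const, nsmul_eq_mul, Complex.conj_natCast]
    ring
  have hcount : ((q * #(incidences X Y Z W) : ℝ) : ℂ) =
      (#X * #Y * #Z * #W : ℝ) + ∑ t ∈ univ.erase 0, T t := by
    have h := card_filter_eq_zero_mul_card hψ (X ×ˢ Y ×ˢ Z ×ˢ W)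
      fun i => i.2.1 + i.1 * i.2.2.1 - i.2.2.2
    simp only [sub_eq_zero, sum_char_add_mul_sub_eq] at h
    push_cast [q]
    rw [← hmain, add_sum_erase _ _ (mem_univ 0), mul_comm]
    exact h
  have herror : ‖∑ t ∈ univ.erase 0, T t‖ ≤ q * √(q * (#X * #Y * #Z * #W)) := by
    calc ‖∑ t ∈ univ.erase 0, T t‖
        ≤ ∑ t ∈ univ.erase 0, ‖charSum ψ Y t‖ * ‖charSum ψ W t‖ * (√(#X) * √(q * #Z)) := by
          refine (norm_sum_le _ _).trans (sum_le_sum fun t ht => ?_)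
          simp only [T, norm_mul, Complex.norm_conj]
          gcongr
          exact norm_sum_charSum_mul_le hψ X Z (ne_of_mem_erase ht)
      _ ≤ ∑ t, ‖charSum ψ Y t‖ * ‖charSum ψ W t‖ * (√(#X) * √(q * #Z)) :=
          sum_le_sum_of_subset_of_nonneg (subset_univ _) fun _ _ _ => by positivity
      _ ≤ √(q * #Y) * √(q * #W) * (√(#X) * √(q * #Z)) := by
          rw [← sum_mul]
          gcongr
          exact sum_norm_charSum_mul_norm_charSum_le hψ Y W
      _ = √(q ^ 2 * (q * (#X * #Y * #Z * #W))) := by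
          rw [← Real.sqrt_mul, ← Real.sqrt_mul, ← Real.sqrt_mul] <;> try positivity
          ring_nf
      _ = q * √(q * (#X * #Y * #Z * #W)) := by
          rw [Real.sqrt_mul (by positivity), Real.sqrt_sq (by positivity)]
  have hre := congrArg Complex.re hcount
  rw [Complex.add_re, Complex.ofReal_re, Complex.ofReal_re] at hre
  linarith [Complex.re_le_norm (∑ t ∈ univ.erase 0, T t)]

end Field

lemma one_div_four_mul_sqrt_le {q a m : ℝ} (hq : 0 ≤ q) (ha : 2 ≤ a) (hqa : q ^ 2 ≤ a ^ 3)
    (hm : 0 ≤ m) (h : q * ((a - 1) * a * a) ≤ a * a * m * m + q * √(q * (a * a * m * m))) :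
    1 / 4 * √(q * a) ≤ m := by
  obtain ⟨s, hs, rfl⟩ : ∃ s, 0 ≤ s ∧ s ^ 2 = q := ⟨√q, Real.sqrt_nonneg q, Real.sq_sqrt hq⟩
  obtain ⟨r, hr, rfl⟩ : ∃ r, 0 ≤ r ∧ r ^ 2 = a :=
    ⟨√a, Real.sqrt_nonneg a, Real.sq_sqrt (by linarith)⟩
  have hsr : s ^ 2 ≤ r ^ 3 := by
    rw [← pow_le_pow_iff_left₀ (by positivity) (by positivity) two_ne_zero]
    linarith [hqa]
  rw [show s ^ 2 * (r ^ 2 * r ^ 2 * m * m) = (s * r ^ 2 * m) ^ 2 by ring,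
    Real.sqrt_sq (by positivity)] at h
  rw [show s ^ 2 * r ^ 2 = (s * r) ^ 2 by ring, Real.sqrt_sq (by positivity)]
  -- with `u = s r = √(q a)`, `h` gives `u² / 2 ≤ m² + u m`, which rules out `m < u / 4`
  have key : (s * r) ^ 2 / 2 ≤ m ^ 2 + s * r * m := by
    have h1 : s ^ 3 * m ≤ s * r ^ 3 * m := by
      nlinarith [mul_le_mul_of_nonneg_left hsr (mul_nonneg hs hm)]
    have h2 : r ^ 4 * (s ^ 2 * (r ^ 2 - 1)) ≤ r ^ 4 * (m ^ 2 + s * r * m) := by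
      nlinarith [mul_le_mul_of_nonneg_left h1 (sq_nonneg r)]
    have h3 := le_of_mul_le_mul_left h2 (by nlinarith)
    nlinarith [mul_nonneg (sq_nonneg s) (sub_nonneg.2 ha)]
  nlinarith

/-- There is `c > 0` such that for every odd prime power `q` and `A ⊆ F_q` with
`q^{2/3} ≤ |A| ≤ q`, `max(|A+A|, |A·A|) ≥ c (q|A|)^{1/2}`. -/
theorem sum_product_large_range :
    ∃ c : ℝ, 0 < c ∧
      ∀ (F : Type) (_ : Field F) (_ : Fintype F) (_ : DecidableEq F) (A : Finset F),
        Odd (Fintype.card F) →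
        ((Fintype.card F : ℝ) ^ ((2 : ℝ) / 3) ≤ (A.card : ℝ)) →
        ((A.card : ℝ) ≤ (Fintype.card F : ℝ)) →
        c * Real.sqrt ((Fintype.card F : ℝ) * A.card)
          ≤ max ((A + A).card : ℝ) ((A * A).card : ℝ) := by
  refine ⟨1 / 4, by norm_num, fun F _ _ _ A _ hA _ => ?_⟩
  have hq : (1 : ℝ) < Fintype.card F := mod_cast Fintype.one_lt_card
  have hA2 : (2 : ℝ) ≤ #A := by
    have : (1 : ℝ) < #A := (Real.one_lt_rpow hq (by norm_num)).trans_le hA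
    exact_mod_cast (show 1 < #A by exact_mod_cast this)
  have hqA : (Fintype.card F : ℝ) ^ 2 ≤ (#A : ℝ) ^ 3 := by
    calc (Fintype.card F : ℝ) ^ 2 = ((Fintype.card F : ℝ) ^ ((2 : ℝ) / 3)) ^ 3 := by
          rw [← Real.rpow_mul_natCast (by positivity)]
          norm_num
      _ ≤ (#A : ℝ) ^ 3 := by gcongr
  have hlower : ((#A : ℝ) - 1) * #A * #A ≤ #(incidences A⁻¹ A (A * A) (A + A)) := by
    have herase : #A ≤ #(A.erase 0) + 1 := by
      have := pred_card_le_card_erase (s := A) (a := 0)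
      omega
    calc ((#A : ℝ) - 1) * #A * #A ≤ #(A.erase 0) * #A * #A := by
          gcongr
          linarith [(mod_cast herase : (#A : ℝ) ≤ #(A.erase 0) + 1)]
      _ ≤ _ := mod_cast card_erase_zero_mul_le_card_incidences A
  have hupper := card_incidences_le A⁻¹ A (A * A) (A + A)
  rw [card_inv] at hupper
  refine one_div_four_mul_sqrt_le (by positivity) hA2 hqA (by positivity) ?_
  set m := max (#(A + A) : ℝ) #(A * A)
  calc (Fintype.card F : ℝ) * ((#A - 1) * #A * #A) ≤ _ := by gcongr
    _ ≤ _ := hupper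
    _ ≤ #A * #A * m * m + Fintype.card F * √(Fintype.card F * (#A * #A * m * m)) := by
      have hP : (#(A * A) : ℝ) ≤ m := le_max_right _ _
      have hS : (#(A + A) : ℝ) ≤ m := le_max_left _ _
      gcongr
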